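/- There is a universal constant C such that for all sufficiently large W the following holds. Let f ∼ M(W) be a random monotone map, so f(x) = exp(x·exp(λ₁))·exp(λ₂) + λ₃ with λ₁, λ₂, λ₃ independent and uniform on [log log W, 2 log log W], [0, (log W)³], [0, exp(2(log W)³)] respectively. Then there exists a fixed probability distribution D on ℝ₊³ (depending only on W) such that for every triple of points 0 ≤ a < b < c ≤ 1 satisfying min(c − b, b − a) > 1/log log W, the total variation distance between the law of (f(a), f(b), f(c)) and D is at most C·(log log log W)/(log log W). -/

import Mathlib

set_option maxHeartbeats 1000000


open MeasureTheory
open scoped ENNReal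

/-- The uniform probability measure on the interval `[a, b]`. -/
noncomputable def unifIcc (a b : ℝ) : Measure ℝ :=
  (ENNReal.ofReal (b - a))⁻¹ • volume.restrict (Set.Icc a b)

/-- The joint law of the parameters `(λ₁, λ₂, λ₃)` of a random monotone map from
`M(W)`: independent uniforms on `[log log W, 2 log log W]`, `[0, (log W)³]` and
`[0, exp(2(log W)³)]`. -/
noncomputable def mwParams (W : ℝ) : Measure (ℝ × ℝ × ℝ) :=
  (unifIcc (Real.log (Real.log W)) (2 * Real.log (Real.log W))).prod
    ((unifIcc 0 ((Real.log W) ^ 3)).prod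
      (unifIcc 0 (Real.exp (2 * (Real.log W) ^ 3))))

/-- The monotone map `f(x) = exp(x·exp λ₁)·exp λ₂ + λ₃` determined by the parameters. -/
noncomputable def applyMW (l : ℝ × ℝ × ℝ) (x : ℝ) : ℝ :=
  Real.exp (x * Real.exp l.1) * Real.exp l.2.1 + l.2.2

/-- The law of the triple `(f(a), f(b), f(c))` for a random `f ∼ M(W)`. -/
noncomputable def tripleLaw (W a b c : ℝ) : Measure (ℝ × ℝ × ℝ) :=
  (mwParams W).map fun l => (applyMW l a, applyMW l b, applyMW l c)

/-- Total variation distance `sup_A |μ(A) − ν(A)|` over measurable sets. -/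
noncomputable def tvDist {X : Type*} [MeasurableSpace X] (μ ν : Measure X) : ℝ :=
  ⨆ A : {A : Set X // MeasurableSet A}, |(μ A.1).toReal - (ν A.1).toReal|


open Real Filter

namespace RMMObscure


lemma unifIcc_apply {a b : ℝ} {B : Set ℝ} (hB : MeasurableSet B) :
    unifIcc a b B = (ENNReal.ofReal (b - a))⁻¹ * volume (B ∩ Set.Icc a b) := by
  rw [unifIcc, Measure.smul_apply, Measure.restrict_apply hB, smul_eq_mul]

lemma isProb_unifIcc {a b : ℝ} (h : a < b) : IsProbabilityMeasure (unifIcc a b) := by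
  constructor
  rw [unifIcc_apply MeasurableSet.univ, Set.univ_inter, Real.volume_Icc]
  exact ENNReal.inv_mul_cancel (by simp [h]) ENNReal.ofReal_ne_top

lemma unifIcc_congr {a b : ℝ} {S S' : Set ℝ} (hS : MeasurableSet S) (hS' : MeasurableSet S')
    (h : S ∩ Set.Icc a b = S' ∩ Set.Icc a b) : unifIcc a b S = unifIcc a b S' := by
  rw [unifIcc_apply hS, unifIcc_apply hS', h]

lemma inv_ofReal_mul_ofReal {L t : ℝ} (hL : 0 < L) :
    (ENNReal.ofReal L)⁻¹ * ENNReal.ofReal t = ENNReal.ofReal (t / L) := by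
  rw [ENNReal.ofReal_div_of_pos hL, div_eq_mul_inv, mul_comm]

lemma unifIcc_shift {L t : ℝ} (hL : 0 < L) (ht : 0 ≤ t) {B : Set ℝ} (hB : MeasurableSet B) :
    unifIcc 0 L ((fun x => x + t) ⁻¹' B) ≤ unifIcc 0 L B + ENNReal.ofReal (t / L) ∧
    unifIcc 0 L B ≤ unifIcc 0 L ((fun x => x + t) ⁻¹' B) + ENNReal.ofReal (t / L) := by
  have hBt : MeasurableSet ((fun x => x + t) ⁻¹' B) := (measurable_add_const t) hB
  have hpre : ((fun x => x + t) ⁻¹' B) ∩ Set.Icc 0 L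
      = (fun x => x + t) ⁻¹' (B ∩ Set.Icc t (t + L)) := by
    ext x
    simp only [Set.mem_inter_iff, Set.mem_preimage, Set.mem_Icc]
    constructor <;> rintro ⟨h1, h2, h3⟩ <;> exact ⟨h1, by linarith, by linarith⟩
  have hvol : volume (((fun x => x + t) ⁻¹' B) ∩ Set.Icc 0 L)
      = volume (B ∩ Set.Icc t (t + L)) := by
    rw [hpre, measure_preimage_add_right]
  have h1 : volume (B ∩ Set.Icc t (t + L)) ≤ volume (B ∩ Set.Icc 0 L) + ENNReal.ofReal t := by
    calc volume (B ∩ Set.Icc t (t + L))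
        ≤ volume ((B ∩ Set.Icc 0 L) ∪ Set.Icc L (t + L)) := by
          refine measure_mono ?_
          rintro x ⟨hxB, hx1, hx2⟩
          rcases le_or_gt x L with h | h
          · exact Or.inl ⟨hxB, by linarith, h⟩
          · exact Or.inr ⟨h.le, hx2⟩
      _ ≤ volume (B ∩ Set.Icc 0 L) + volume (Set.Icc L (t + L)) := measure_union_le _ _
      _ = volume (B ∩ Set.Icc 0 L) + ENNReal.ofReal t := by rw [Real.volume_Icc]; ring_nf
  have h2 : volume (B ∩ Set.Icc 0 L) ≤ volume (B ∩ Set.Icc t (t + L)) + ENNReal.ofReal t := by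
    calc volume (B ∩ Set.Icc 0 L)
        ≤ volume ((B ∩ Set.Icc t (t + L)) ∪ Set.Icc 0 t) := by
          refine measure_mono ?_
          rintro x ⟨hxB, hx1, hx2⟩
          rcases le_or_gt x t with h | h
          · exact Or.inr ⟨hx1, h⟩
          · exact Or.inl ⟨hxB, h.le, by linarith⟩
      _ ≤ volume (B ∩ Set.Icc t (t + L)) + volume (Set.Icc 0 t) := measure_union_le _ _
      _ = volume (B ∩ Set.Icc t (t + L)) + ENNReal.ofReal t := by rw [Real.volume_Icc, sub_zero]
  constructor
  · rw [unifIcc_apply hBt, unifIcc_apply hB, hvol, sub_zero]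
    calc (ENNReal.ofReal L)⁻¹ * volume (B ∩ Set.Icc t (t + L))
        ≤ (ENNReal.ofReal L)⁻¹ * (volume (B ∩ Set.Icc 0 L) + ENNReal.ofReal t) :=
          mul_le_mul_right h1 _
      _ = (ENNReal.ofReal L)⁻¹ * volume (B ∩ Set.Icc 0 L) + ENNReal.ofReal (t / L) := by
          rw [mul_add, inv_ofReal_mul_ofReal hL]
  · rw [unifIcc_apply hBt, unifIcc_apply hB, hvol, sub_zero]
    calc (ENNReal.ofReal L)⁻¹ * volume (B ∩ Set.Icc 0 L)
        ≤ (ENNReal.ofReal L)⁻¹ * (volume (B ∩ Set.Icc t (t + L)) + ENNReal.ofReal t) :=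
          mul_le_mul_right h2 _
      _ = (ENNReal.ofReal L)⁻¹ * volume (B ∩ Set.Icc t (t + L)) + ENNReal.ofReal (t / L) := by
          rw [mul_add, inv_ofReal_mul_ofReal hL]



noncomputable def Nf (c b : ℝ) (x : ℝ) : ℝ := exp (c * exp x) - exp (b * exp x)

noncomputable def Qf (a b c : ℝ) (x : ℝ) : ℝ := Real.log (Nf c b x) - Real.log (Nf b a x)

noncomputable def Tf (a b c : ℝ) (x : ℝ) : ℝ := Real.log (Qf a b c x)

noncomputable def Nd (c b : ℝ) (x : ℝ) : ℝ :=
  c * exp x * exp (c * exp x) - b * exp x * exp (b * exp x)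

noncomputable def Td (a b c : ℝ) (x : ℝ) : ℝ :=
  (Nd c b x / Nf c b x - Nd b a x / Nf b a x) / Qf a b c x

lemma Nf_pos {b c : ℝ} (h : b < c) (x : ℝ) : 0 < Nf c b x := by
  have := exp_pos x
  exact sub_pos.2 (exp_lt_exp.2 (by nlinarith))

lemma measurable_expexp (p : ℝ) : Measurable fun x => exp (p * exp x) :=
  (Real.measurable_exp.const_mul p).exp

lemma measurable_Nf (p q : ℝ) : Measurable (Nf p q) :=
  (measurable_expexp p).sub (measurable_expexp q)

lemma measurable_Qf (a b c : ℝ) : Measurable (Qf a b c) :=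
  ((measurable_Nf c b).log).sub ((measurable_Nf b a).log)

lemma measurable_Tf (a b c : ℝ) : Measurable (Tf a b c) :=
  (measurable_Qf a b c).log

lemma measurable_Nd (p q : ℝ) : Measurable (Nd p q) :=
  ((Real.measurable_exp.const_mul p).mul (measurable_expexp p)).sub
    ((Real.measurable_exp.const_mul q).mul (measurable_expexp q))

lemma measurable_Td (a b c : ℝ) : Measurable (Td a b c) :=
  ((((measurable_Nd c b).div (measurable_Nf c b)).sub
    ((measurable_Nd b a).div (measurable_Nf b a)))).div (measurable_Qf a b c)

lemma hasDerivAt_Nf (c b x : ℝ) : HasDerivAt (Nf c b) (Nd c b x) x := by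
  have h1 : HasDerivAt (fun x => exp (c * exp x)) (exp (c * exp x) * (c * exp x)) x :=
    ((Real.hasDerivAt_exp x).const_mul c).exp
  have h2 : HasDerivAt (fun x => exp (b * exp x)) (exp (b * exp x) * (b * exp x)) x :=
    ((Real.hasDerivAt_exp x).const_mul b).exp
  have := h1.sub h2
  rw [show Nd c b x = exp (c * exp x) * (c * exp x) - exp (b * exp x) * (b * exp x) by
    unfold Nd; ring]
  exact this

lemma hasDerivAt_Tf {a b c : ℝ} (hab : a < b) (hbc : b < c) {x : ℝ}
    (hQ : Qf a b c x ≠ 0) : HasDerivAt (Tf a b c) (Td a b c x) x := by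
  have hN : Nf c b x ≠ 0 := (Nf_pos hbc x).ne'
  have hD : Nf b a x ≠ 0 := (Nf_pos hab x).ne'
  have h1 : HasDerivAt (fun y => Real.log (Nf c b y)) (Nd c b x / Nf c b x) x :=
    (hasDerivAt_Nf c b x).log hN
  have h2 : HasDerivAt (fun y => Real.log (Nf b a y)) (Nd b a x / Nf b a x) x :=
    (hasDerivAt_Nf b a x).log hD
  exact (h1.sub h2).log hQ

lemma slope_bounds {y z : ℝ} (h : y < z) :
    z ≤ (z * exp z - y * exp y) / (exp z - exp y) ∧
    (z * exp z - y * exp y) / (exp z - exp y) ≤ z + 1 := by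
  have hd : 0 < exp z - exp y := sub_pos.2 (exp_lt_exp.2 h)
  have hw : exp z = exp y * exp (z - y) := by rw [← Real.exp_add]; ring_nf
  have h1 := add_one_le_exp (z - y)
  have hy := exp_pos y
  constructor
  · rw [le_div_iff₀ hd]; nlinarith
  · rw [div_le_iff₀ hd]; nlinarith

/-- The key pointwise analytic bounds. -/
lemma T_bounds {a b c lw ll : ℝ} (ha : 0 ≤ a) (hab : a < b) (hbc : b < c) (hc1 : c ≤ 1)
    (hll : 1 ≤ ll) (h6 : 6 * ll ≤ lw)
    (hcb : 1 / ll < c - b) (hba : 1 / ll < b - a)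
    {x : ℝ} (hu1 : lw ≤ exp x) :
    2 ≤ Qf a b c x ∧
    |Td a b c x - 1| ≤ 3 * ll / lw ∧
    |Tf a b c x - x| ≤ 1 + Real.log ll := by
  have hll0 : 0 < ll := by linarith
  have hlw0 : 0 < lw := by linarith
  have hu0 : 0 < exp x := exp_pos x
  set m := (c - b) * exp x with hm
  set t := (b - a) * exp x with htdef
  have hlwll : lw / ll ≤ m := by
    rw [div_le_iff₀ hll0, hm]
    calc lw ≤ exp x := hu1
      _ = (1 / ll) * exp x * ll := by field_simp
      _ ≤ (c - b) * exp x * ll := by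
          have h := hcb.le
          have := mul_le_mul_of_nonneg_right (mul_le_mul_of_nonneg_right h hu0.le) hll0.le
          linarith
  have hlwll' : lw / ll ≤ t := by
    rw [div_le_iff₀ hll0, htdef]
    calc lw ≤ exp x := hu1
      _ = (1 / ll) * exp x * ll := by field_simp
      _ ≤ (b - a) * exp x * ll := by
          have h := hba.le
          have := mul_le_mul_of_nonneg_right (mul_le_mul_of_nonneg_right h hu0.le) hll0.le
          linarith
  have h6' : (6:ℝ) ≤ lw / ll := (le_div_iff₀ hll0).2 (by linarith)
  have hm6 : 6 ≤ m := le_trans h6' hlwll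
  have ht6 : 6 ≤ t := le_trans h6' hlwll'
  have hN : 0 < Nf c b x := Nf_pos hbc x
  have hD : 0 < Nf b a x := Nf_pos hab x
  have hcu : exp (c * exp x) = exp (b * exp x) * exp m := by
    rw [hm, ← Real.exp_add]; ring_nf
  have hau : exp (a * exp x) = exp (b * exp x) * exp (-t) := by
    rw [htdef, ← Real.exp_add]; ring_nf
  have hebu : 0 < exp (b * exp x) := exp_pos _
  have hem : 7 ≤ exp m := by have := add_one_le_exp m; linarith
  have het : (2:ℝ) ≤ exp t := by have := add_one_le_exp t; linarith
  have hemt : exp (-t) ≤ 1/2 := by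
    have h1 : exp (-t) * exp t = 1 := by rw [← Real.exp_add]; simp
    nlinarith [exp_pos (-t)]
  have hNub : Nf c b x ≤ exp (b * exp x) * exp m := by
    unfold Nf; rw [hcu]; linarith
  have hNlb : exp (b * exp x) * exp m / 2 ≤ Nf c b x := by
    unfold Nf; rw [hcu]
    have := mul_le_mul_of_nonneg_left hem hebu.le
    linarith
  have hDub : Nf b a x ≤ exp (b * exp x) := by
    unfold Nf; have := exp_pos (a * exp x); linarith
  have hDlb : exp (b * exp x) / 2 ≤ Nf b a x := by
    unfold Nf; rw [hau]
    have := mul_le_mul_of_nonneg_left hemt hebu.le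
    linarith
  have hlog2 : Real.log 2 ≤ 3/4 := by have := Real.log_two_lt_d9; linarith
  have hlog2' : (0:ℝ) ≤ Real.log 2 := Real.log_nonneg (by norm_num)
  have hQub : Qf a b c x ≤ m + 3/4 := by
    unfold Qf
    have h1 : Real.log (Nf c b x) ≤ b * exp x + m := by
      calc Real.log (Nf c b x) ≤ Real.log (exp (b * exp x) * exp m) := Real.log_le_log hN hNub
        _ = b * exp x + m := by rw [← Real.exp_add, Real.log_exp]
    have h2 : b * exp x - Real.log 2 ≤ Real.log (Nf b a x) := by
      calc b * exp x - Real.log 2 = Real.log (exp (b * exp x) / 2) := by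
            rw [Real.log_div hebu.ne' (by norm_num), Real.log_exp]
        _ ≤ Real.log (Nf b a x) := Real.log_le_log (by positivity) hDlb
    linarith
  have hQlb : m - 3/4 ≤ Qf a b c x := by
    unfold Qf
    have h1 : b * exp x + m - Real.log 2 ≤ Real.log (Nf c b x) := by
      calc b * exp x + m - Real.log 2 = Real.log (exp (b * exp x) * exp m / 2) := by
            rw [Real.log_div (by positivity) (by norm_num), ← Real.exp_add, Real.log_exp]
        _ ≤ Real.log (Nf c b x) := Real.log_le_log (by positivity) hNlb
    have h2 : Real.log (Nf b a x) ≤ b * exp x := by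
      calc Real.log (Nf b a x) ≤ Real.log (exp (b * exp x)) := Real.log_le_log hD hDub
        _ = b * exp x := Real.log_exp _
    linarith
  have hQ2 : 2 ≤ Qf a b c x := by linarith
  have hQ0 : 0 < Qf a b c x := by linarith
  refine ⟨hQ2, ?_, ?_⟩
  · -- |Td - 1| ≤ 3 ll / lw
    have hbcx : b * exp x < c * exp x := by nlinarith
    have habx : a * exp x < b * exp x := by nlinarith
    have hX : c * exp x ≤ Nd c b x / Nf c b x ∧ Nd c b x / Nf c b x ≤ c * exp x + 1 := by
      unfold Nd Nf
      exact slope_bounds (y := b * exp x) (z := c * exp x) hbcx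
    have hY : b * exp x ≤ Nd b a x / Nf b a x ∧ Nd b a x / Nf b a x ≤ b * exp x + 1 := by
      unfold Nd Nf
      exact slope_bounds (y := a * exp x) (z := b * exp x) habx
    set X := Nd c b x / Nf c b x - Nd b a x / Nf b a x with hXdef
    have hX1 : m - 1 ≤ X := by rw [hXdef, hm]; have := hX.1; have := hY.2; linarith [hm]
    have hX2 : X ≤ m + 1 := by rw [hXdef, hm]; have := hX.2; have := hY.1; linarith [hm]
    have hTd : Td a b c x - 1 = (X - Qf a b c x) / Qf a b c x := by
      unfold Td
      rw [← hXdef]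
      field_simp
    rw [hTd, abs_div, abs_of_pos hQ0]
    have hnum : |X - Qf a b c x| ≤ 7/4 := by
      rw [abs_le]; constructor <;> linarith
    calc |X - Qf a b c x| / Qf a b c x ≤ (7/4) / (m - 3/4) :=
          div_le_div₀ (by norm_num) hnum (by linarith) hQlb
      _ ≤ 3 / m := by
          rw [div_le_div_iff₀ (by linarith) (by linarith)]
          nlinarith
      _ ≤ 3 * ll / lw := by
          rw [div_le_div_iff₀ (by linarith) hlw0]
          rw [div_le_iff₀ hll0] at hlwll
          nlinarith
  · -- |Tf - x| ≤ 1 + log ll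
    have hloglla : (0:ℝ) ≤ Real.log ll := Real.log_nonneg hll
    have hmu : m ≤ exp x := by
      rw [hm]
      have := mul_le_mul_of_nonneg_right (show c - b ≤ (1:ℝ) by linarith) hu0.le
      linarith
    have hub' : Qf a b c x ≤ 2 * exp x := by nlinarith
    have hlb' : exp x / (2 * ll) ≤ Qf a b c x := by
      have h1 : exp x / ll ≤ m := by
        rw [div_le_iff₀ hll0, hm]
        have := mul_le_mul_of_nonneg_right (mul_le_mul_of_nonneg_right hcb.le hu0.le) hll0.le
        calc exp x = (1 / ll) * exp x * ll := by field_simp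
          _ ≤ (c - b) * exp x * ll := by linarith
      have h2 : (3:ℝ)/4 ≤ exp x / (2 * ll) := by
        rw [le_div_iff₀ (by positivity)]
        nlinarith [hu1]
      have h3 : exp x / (2*ll) + exp x / (2*ll) = exp x / ll := by field_simp; ring
      linarith
    unfold Tf
    rw [abs_le]
    constructor
    · have hlog : Real.log (exp x / (2 * ll)) ≤ Real.log (Qf a b c x) :=
        Real.log_le_log (by positivity) hlb'
      have heq : Real.log (exp x / (2 * ll)) = x - (Real.log 2 + Real.log ll) := by
        rw [Real.log_div hu0.ne' (by positivity), Real.log_mul (by norm_num) hll0.ne',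
          Real.log_exp]
      rw [heq] at hlog
      linarith
    · have hlog : Real.log (Qf a b c x) ≤ Real.log (2 * exp x) := Real.log_le_log hQ0 hub'
      have heq : Real.log (2 * exp x) = Real.log 2 + x := by
        rw [Real.log_mul (by norm_num) hu0.ne', Real.log_exp]
      rw [heq] at hlog
      linarith



noncomputable def G0 (a b c : ℝ) (l : ℝ × ℝ × ℝ) : ℝ × ℝ × ℝ :=
  (applyMW l a, applyMW l b, applyMW l c)

noncomputable def G1 (a b c : ℝ) (l : ℝ × ℝ × ℝ) : ℝ × ℝ × ℝ :=
  (l.2.2, l.2.2 + (exp (b * exp l.1) - exp (a * exp l.1)) * exp l.2.1,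
    l.2.2 + (exp (c * exp l.1) - exp (a * exp l.1)) * exp l.2.1)

noncomputable def G2 (a b c : ℝ) (l : ℝ × ℝ × ℝ) : ℝ × ℝ × ℝ :=
  (l.2.2, l.2.2 + exp l.2.1, l.2.2 + exp l.2.1 + exp (l.2.1 + Qf a b c l.1))

noncomputable def G3 (l : ℝ × ℝ × ℝ) : ℝ × ℝ × ℝ :=
  (l.2.2, l.2.2 + exp l.2.1, l.2.2 + exp l.2.1 + exp (l.2.1 + exp l.1))

noncomputable def sh3 (a : ℝ) (x y : ℝ) : ℝ := exp (a * exp x) * exp y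

lemma measurable_applyMW (x : ℝ) : Measurable fun l : ℝ × ℝ × ℝ => applyMW l x := by
  unfold applyMW
  exact (((measurable_expexp x).comp measurable_fst).mul
    ((measurable_fst.comp measurable_snd).exp)).add (measurable_snd.comp measurable_snd)

lemma measurable_G0 (a b c : ℝ) : Measurable (G0 a b c) :=
  (measurable_applyMW a).prodMk ((measurable_applyMW b).prodMk (measurable_applyMW c))

lemma measurable_G1 (a b c : ℝ) : Measurable (G1 a b c) := by
  unfold G1
  have h1 : Measurable fun l : ℝ × ℝ × ℝ => l.2.2 := measurable_snd.comp measurable_snd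
  have h2 : ∀ p q : ℝ, Measurable fun l : ℝ × ℝ × ℝ =>
      l.2.2 + (exp (p * exp l.1) - exp (q * exp l.1)) * exp l.2.1 := fun p q =>
    h1.add ((((measurable_expexp p).comp measurable_fst).sub
      ((measurable_expexp q).comp measurable_fst)).mul
      ((measurable_fst.comp measurable_snd).exp))
  exact h1.prodMk ((h2 b a).prodMk (h2 c a))

lemma measurable_G2 (a b c : ℝ) : Measurable (G2 a b c) := by
  unfold G2
  have h1 : Measurable fun l : ℝ × ℝ × ℝ => l.2.2 := measurable_snd.comp measurable_snd
  have h2 : Measurable fun l : ℝ × ℝ × ℝ => l.2.1 := measurable_fst.comp measurable_snd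
  exact h1.prodMk ((h1.add h2.exp).prodMk
    ((h1.add h2.exp).add ((h2.add ((measurable_Qf a b c).comp measurable_fst)).exp)))

lemma measurable_G3 : Measurable G3 := by
  unfold G3
  have h1 : Measurable fun l : ℝ × ℝ × ℝ => l.2.2 := measurable_snd.comp measurable_snd
  have h2 : Measurable fun l : ℝ × ℝ × ℝ => l.2.1 := measurable_fst.comp measurable_snd
  exact h1.prodMk ((h1.add h2.exp).prodMk
    ((h1.add h2.exp).add ((h2.add (measurable_fst.exp)).exp)))

lemma measurable_sh3 (a : ℝ) : Measurable (Function.uncurry (sh3 a)) := by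
  unfold sh3 Function.uncurry
  exact (((measurable_expexp a).comp measurable_fst).mul measurable_snd.exp)

lemma G0_eq (a b c : ℝ) (l : ℝ × ℝ × ℝ) :
    G0 a b c l = G1 a b c (l.1, l.2.1, l.2.2 + sh3 a l.1 l.2.1) := by
  unfold G0 G1 sh3 applyMW
  simp only [Prod.mk.injEq]
  refine ⟨by ring, by ring, by ring⟩

lemma G1_eq {a b c : ℝ} (hab : a < b) (hbc : b < c) (l : ℝ × ℝ × ℝ) :
    G1 a b c l = G2 a b c (l.1, l.2.1 + Real.log (Nf b a l.1), l.2.2) := by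
  have hD : 0 < Nf b a l.1 := Nf_pos hab l.1
  have hN : 0 < Nf c b l.1 := Nf_pos hbc l.1
  have h1 : exp (l.2.1 + Real.log (Nf b a l.1)) = Nf b a l.1 * exp l.2.1 := by
    rw [Real.exp_add, Real.exp_log hD]; ring
  have h2 : exp (l.2.1 + Real.log (Nf b a l.1) + Qf a b c l.1) = Nf c b l.1 * exp l.2.1 := by
    have : l.2.1 + Real.log (Nf b a l.1) + Qf a b c l.1 = l.2.1 + Real.log (Nf c b l.1) := by
      unfold Qf; ring
    rw [this, Real.exp_add, Real.exp_log hN]; ring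
  unfold G1 G2
  simp only [Prod.mk.injEq]
  refine ⟨trivial, ?_, ?_⟩
  · rw [h1]; unfold Nf; ring
  · rw [h1, h2]; unfold Nf; ring

lemma G2_eq {a b c : ℝ} {x : ℝ} (hQ : 0 < Qf a b c x) (p : ℝ × ℝ) :
    G2 a b c (x, p.1, p.2) = G3 (Tf a b c x, p.1, p.2) := by
  unfold G2 G3 Tf
  simp only [Prod.mk.injEq]
  rw [Real.exp_log hQ]
  exact ⟨trivial, trivial, rfl⟩

/-- bounds on the middle shift. -/
lemma sh2_bounds {a b lw ll x : ℝ} (ha : 0 ≤ a) (hab : a < b) (hb1 : b ≤ 1) (hll : 1 ≤ ll)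
    (h6 : 6 * ll ≤ lw) (hba : 1 / ll < b - a) (hu1 : lw ≤ exp x) (hu2 : exp x ≤ lw ^ 2) :
    0 ≤ Real.log (Nf b a x) ∧ Real.log (Nf b a x) ≤ lw ^ 2 := by
  have hll0 : 0 < ll := by linarith
  have hlw0 : 0 < lw := by linarith
  have hu0 : 0 < exp x := exp_pos x
  have hD : 0 < Nf b a x := Nf_pos hab x
  have ht : 6 ≤ (b - a) * exp x := by
    have h1 : (6:ℝ) ≤ lw / ll := (le_div_iff₀ hll0).2 (by linarith)
    have h2 : lw / ll ≤ (b - a) * exp x := by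
      rw [div_le_iff₀ hll0]
      calc lw ≤ exp x := hu1
        _ = (1 / ll) * exp x * ll := by field_simp
        _ ≤ (b - a) * exp x * ll := by
            have := mul_le_mul_of_nonneg_right
              (mul_le_mul_of_nonneg_right hba.le hu0.le) hll0.le
            linarith
    linarith
  constructor
  · apply Real.log_nonneg
    have hexp : exp (b * exp x) = exp (a * exp x) * exp ((b - a) * exp x) := by
      rw [← Real.exp_add]; ring_nf
    have h1 : (1:ℝ) ≤ exp (a * exp x) := Real.one_le_exp (by positivity)
    have h2 : (7:ℝ) ≤ exp ((b - a) * exp x) := by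
      have := add_one_le_exp ((b - a) * exp x); linarith
    unfold Nf
    rw [hexp]
    nlinarith
  · have h1 : Nf b a x ≤ exp (b * exp x) := by
      unfold Nf; have := exp_pos (a * exp x); linarith
    calc Real.log (Nf b a x) ≤ Real.log (exp (b * exp x)) := Real.log_le_log hD h1
      _ = b * exp x := Real.log_exp _
      _ ≤ lw ^ 2 := by nlinarith



/-- Volume of image of a set under a differentiable injective map. -/
lemma volume_image_deriv {s : Set ℝ} {T T' : ℝ → ℝ} (hs : MeasurableSet s)
    (hT' : ∀ x ∈ s, HasDerivWithinAt T (T' x) s x) (hinj : Set.InjOn T s) :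
    volume (T '' s) = ∫⁻ x in s, ENNReal.ofReal |T' x| := by
  have := lintegral_image_eq_lintegral_abs_det_fderiv_mul volume hs
    (fun x hx => (hT' x hx).hasFDerivWithinAt) hinj (fun _ => 1)
  simpa [ContinuousLinearMap.det_toSpanSingleton, setLIntegral_one] using this

/-- Key 1-d lemma: a monotone perturbation of the identity almost preserves a
uniform measure. -/
lemma unif_mono_map {α β s ε : ℝ} (hab : α < β) (hs : 0 ≤ s) (hε : 0 ≤ ε)
    {T T' : ℝ → ℝ} (hTmeas : Measurable T) (hT'meas : Measurable T')
    (hT' : ∀ x ∈ Set.Icc α β, HasDerivAt T (T' x) x)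
    (hT'lb : ∀ x ∈ Set.Icc α β, 1 - ε ≤ T' x) (hT'ub : ∀ x ∈ Set.Icc α β, T' x ≤ 1 + ε)
    (hTs : ∀ x ∈ Set.Icc α β, |T x - x| ≤ s)
    {B : Set ℝ} (hB : MeasurableSet B) :
    unifIcc α β (T ⁻¹' B) ≤ unifIcc α β B + ENNReal.ofReal ((2 * s + ε * (β - α)) / (β - α)) ∧
    unifIcc α β B ≤ unifIcc α β (T ⁻¹' B) + ENNReal.ofReal ((2 * s + ε * (β - α)) / (β - α)) := by
  have hlen : (0:ℝ) < β - α := sub_pos.2 hab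
  haveI : IsProbabilityMeasure (unifIcc α β) := by
    constructor
    rw [unifIcc_apply MeasurableSet.univ, Set.univ_inter, Real.volume_Icc]
    exact ENNReal.inv_mul_cancel (by simp [hab]) ENNReal.ofReal_ne_top
  set I : Set ℝ := Set.Icc α β with hI
  set E : Set ℝ := T ⁻¹' B ∩ I with hEdef
  have hEmeas : MeasurableSet E := (hTmeas hB).inter measurableSet_Icc
  have hEsub : E ⊆ I := Set.inter_subset_right
  rcases le_or_gt 1 ε with hε1 | hε1
  -- trivial case: ε ≥ 1
  · have htriv : (1:ℝ≥0∞) ≤ ENNReal.ofReal ((2 * s + ε * (β - α)) / (β - α)) := by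
      rw [ENNReal.one_le_ofReal]
      rw [le_div_iff₀ hlen]
      nlinarith
    constructor
    · calc unifIcc α β (T ⁻¹' B) ≤ 1 := prob_le_one
        _ ≤ _ := le_add_self.trans (add_le_add_right htriv _) |>.trans_eq (by rw [add_comm]) |>.trans_eq rfl
    · calc unifIcc α β B ≤ 1 := prob_le_one
        _ ≤ _ := le_add_self.trans (add_le_add_right htriv _) |>.trans_eq (by rw [add_comm])
  -- main case: ε < 1
  have hmono : StrictMonoOn T I := by
    have hcont : ContinuousOn T I := fun x hx => (hT' x hx).continuousAt.continuousWithinAt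
    refine strictMonoOn_of_deriv_pos (convex_Icc α β) hcont ?_
    intro x hx
    rw [interior_Icc] at hx
    have hx' : x ∈ I := Set.mem_Icc.2 ⟨hx.1.le, hx.2.le⟩
    rw [(hT' x hx').deriv]
    have := hT'lb x hx'
    linarith
  have hinj : Set.InjOn T E := (hmono.injOn).mono hEsub
  have himgI : T '' I = Set.Icc (T α) (T β) := by
    apply Set.Subset.antisymm
    · rintro y ⟨x, hx, rfl⟩
      exact ⟨hmono.monotoneOn (Set.left_mem_Icc.2 hab.le) hx hx.1,
        hmono.monotoneOn hx (Set.right_mem_Icc.2 hab.le) hx.2⟩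
    · exact intermediate_value_Icc hab.le fun x hx => (hT' x hx).continuousAt.continuousWithinAt
  have himgE : T '' E = B ∩ Set.Icc (T α) (T β) := by
    rw [← himgI]
    apply Set.Subset.antisymm
    · rintro y ⟨x, ⟨hxB, hxI⟩, rfl⟩
      exact ⟨hxB, ⟨x, hxI, rfl⟩⟩
    · rintro y ⟨hyB, ⟨x, hxI, rfl⟩⟩
      exact ⟨x, ⟨hyB, hxI⟩, rfl⟩
  have hvolimg : volume (T '' E) = ∫⁻ x in E, ENNReal.ofReal |T' x| :=
    volume_image_deriv hEmeas
      (fun x hx => ((hT' x (hEsub hx)).hasDerivWithinAt)) hinj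
  have habs : ∀ x ∈ E, |T' x| = T' x := fun x hx =>
    abs_of_pos (by have := hT'lb x (hEsub hx); linarith)
  -- bounds on the integral
  have hub : volume (T '' E) ≤ ENNReal.ofReal (1 + ε) * volume E := by
    rw [hvolimg]
    calc ∫⁻ x in E, ENNReal.ofReal |T' x| ≤ ∫⁻ _x in E, ENNReal.ofReal (1 + ε) := by
          refine setLIntegral_mono measurable_const fun x hx => ?_
          rw [habs x hx]
          exact ENNReal.ofReal_le_ofReal (hT'ub x (hEsub hx))
      _ = ENNReal.ofReal (1 + ε) * volume E := setLIntegral_const _ _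
  have hlb : ENNReal.ofReal (1 - ε) * volume E ≤ volume (T '' E) := by
    rw [hvolimg]
    calc ENNReal.ofReal (1 - ε) * volume E = ∫⁻ _x in E, ENNReal.ofReal (1 - ε) :=
          (setLIntegral_const _ _).symm
      _ ≤ ∫⁻ x in E, ENNReal.ofReal |T' x| := by
          refine setLIntegral_mono (hT'meas.norm.ennreal_ofReal) fun x hx => ?_
          rw [habs x hx]
          exact ENNReal.ofReal_le_ofReal (hT'lb x (hEsub hx))
  have hvolE_le : volume E ≤ ENNReal.ofReal (β - α) := by
    calc volume E ≤ volume I := measure_mono hEsub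
      _ = ENNReal.ofReal (β - α) := Real.volume_Icc
  -- comparing B ∩ [Tα, Tβ] with B ∩ [α, β]
  have hsα : |T α - α| ≤ s := hTs α (Set.left_mem_Icc.2 hab.le)
  have hsβ : |T β - β| ≤ s := hTs β (Set.right_mem_Icc.2 hab.le)
  have hcomp1 : volume (B ∩ Set.Icc (T α) (T β))
      ≤ volume (B ∩ I) + ENNReal.ofReal (2 * s) := by
    calc volume (B ∩ Set.Icc (T α) (T β))
        ≤ volume ((B ∩ I) ∪ (Set.Icc (α - s) α ∪ Set.Icc β (β + s))) := by
          refine measure_mono ?_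
          rintro x ⟨hxB, hx1, hx2⟩
          have h1 : α - s ≤ x := by have := abs_le.1 hsα; linarith
          have h2 : x ≤ β + s := by have := abs_le.1 hsβ; linarith
          rcases le_or_gt x α with h | h
          · exact Or.inr (Or.inl ⟨h1, h⟩)
          rcases le_or_gt x β with h' | h'
          · exact Or.inl ⟨hxB, h.le, h'⟩
          · exact Or.inr (Or.inr ⟨h'.le, h2⟩)
      _ ≤ volume (B ∩ I) + volume (Set.Icc (α - s) α ∪ Set.Icc β (β + s)) := measure_union_le _ _
      _ ≤ volume (B ∩ I) + (volume (Set.Icc (α - s) α) + volume (Set.Icc β (β + s))) :=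
          add_le_add_right (measure_union_le _ _) _
      _ = volume (B ∩ I) + ENNReal.ofReal (2 * s) := by
          rw [Real.volume_Icc, Real.volume_Icc]
          rw [show α - (α - s) = s by ring, show β + s - β = s by ring,
            ← ENNReal.ofReal_add hs hs]
          ring_nf
  have hcomp2 : volume (B ∩ I)
      ≤ volume (B ∩ Set.Icc (T α) (T β)) + ENNReal.ofReal (2 * s) := by
    calc volume (B ∩ I)
        ≤ volume ((B ∩ Set.Icc (T α) (T β)) ∪ (Set.Icc (T α - s) (T α) ∪ Set.Icc (T β) (T β + s))) := by
          refine measure_mono ?_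
          rintro x ⟨hxB, hx1, hx2⟩
          have h1 : T α - s ≤ x := by have := abs_le.1 hsα; linarith
          have h2 : x ≤ T β + s := by have := abs_le.1 hsβ; linarith
          rcases le_or_gt x (T α) with h | h
          · exact Or.inr (Or.inl ⟨h1, h⟩)
          rcases le_or_gt x (T β) with h' | h'
          · exact Or.inl ⟨hxB, h.le, h'⟩
          · exact Or.inr (Or.inr ⟨h'.le, h2⟩)
      _ ≤ volume (B ∩ Set.Icc (T α) (T β)) + (volume (Set.Icc (T α - s) (T α)) + volume (Set.Icc (T β) (T β + s))) :=
          (measure_union_le _ _).trans (add_le_add_right (measure_union_le _ _) _)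
      _ = volume (B ∩ Set.Icc (T α) (T β)) + ENNReal.ofReal (2 * s) := by
          rw [Real.volume_Icc, Real.volume_Icc]
          rw [show T α - (T α - s) = s by ring, show T β + s - T β = s by ring,
            ← ENNReal.ofReal_add hs hs]
          ring_nf
  -- main volume inequalities
  have key1 : volume E ≤ volume (B ∩ I) + ENNReal.ofReal (2 * s + ε * (β - α)) := by
    have hsplit : (1:ℝ≥0∞) = ENNReal.ofReal (1 - ε) + ENNReal.ofReal ε := by
      rw [← ENNReal.ofReal_add (by linarith) hε]
      norm_num
    calc volume E = (ENNReal.ofReal (1 - ε) + ENNReal.ofReal ε) * volume E := by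
          rw [← hsplit, one_mul]
      _ = ENNReal.ofReal (1 - ε) * volume E + ENNReal.ofReal ε * volume E := by rw [add_mul]
      _ ≤ volume (T '' E) + ENNReal.ofReal ε * ENNReal.ofReal (β - α) :=
          add_le_add hlb (mul_le_mul_right hvolE_le _)
      _ ≤ (volume (B ∩ I) + ENNReal.ofReal (2 * s)) + ENNReal.ofReal (ε * (β - α)) := by
          rw [himgE] at *
          exact add_le_add hcomp1 (by rw [ENNReal.ofReal_mul hε])
      _ = volume (B ∩ I) + ENNReal.ofReal (2 * s + ε * (β - α)) := by
          rw [ENNReal.ofReal_add (by linarith) (by positivity), add_assoc]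
  have key2 : volume (B ∩ I) ≤ volume E + ENNReal.ofReal (2 * s + ε * (β - α)) := by
    calc volume (B ∩ I) ≤ volume (T '' E) + ENNReal.ofReal (2 * s) := by
          rw [himgE]; exact hcomp2
      _ ≤ ENNReal.ofReal (1 + ε) * volume E + ENNReal.ofReal (2 * s) :=
          add_le_add_left hub _
      _ = volume E + (ENNReal.ofReal ε * volume E + ENNReal.ofReal (2 * s)) := by
          rw [ENNReal.ofReal_add (by norm_num) hε, ENNReal.ofReal_one, add_mul, one_mul, add_assoc]
      _ ≤ volume E + (ENNReal.ofReal (ε * (β - α)) + ENNReal.ofReal (2 * s)) := by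
          refine add_le_add_right (add_le_add_left ?_ _) _
          rw [ENNReal.ofReal_mul hε]
          exact mul_le_mul_right hvolE_le _
      _ = volume E + ENNReal.ofReal (2 * s + ε * (β - α)) := by
          rw [← ENNReal.ofReal_add (by positivity) (by linarith), add_comm (ε * (β - α))]
  -- conclude
  have hTBmeas : MeasurableSet (T ⁻¹' B) := hTmeas hB
  constructor
  · rw [unifIcc_apply hTBmeas, unifIcc_apply hB]
    calc (ENNReal.ofReal (β - α))⁻¹ * volume (T ⁻¹' B ∩ I)
        ≤ (ENNReal.ofReal (β - α))⁻¹ * (volume (B ∩ I) + ENNReal.ofReal (2 * s + ε * (β - α))) :=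
          mul_le_mul_right key1 _
      _ = _ := by rw [mul_add, inv_ofReal_mul_ofReal hlen]
  · rw [unifIcc_apply hTBmeas, unifIcc_apply hB]
    calc (ENNReal.ofReal (β - α))⁻¹ * volume (B ∩ I)
        ≤ (ENNReal.ofReal (β - α))⁻¹ * (volume (T ⁻¹' B ∩ I) + ENNReal.ofReal (2 * s + ε * (β - α))) :=
          mul_le_mul_right key2 _
      _ = _ := by rw [mul_add, inv_ofReal_mul_ofReal hlen]



lemma ae_mem_unifIcc {a b : ℝ} : ∀ᵐ x ∂(unifIcc a b), x ∈ Set.Icc a b := by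
  rw [ae_iff]
  have h : {x : ℝ | ¬ x ∈ Set.Icc a b} = (Set.Icc a b)ᶜ := rfl
  rw [h, unifIcc, Measure.smul_apply, Measure.restrict_apply measurableSet_Icc.compl,
    Set.compl_inter_self, measure_empty, smul_zero]

lemma shift_last {μ1 μ2 : Measure ℝ} [IsProbabilityMeasure μ1] [IsProbabilityMeasure μ2]
    {L : ℝ} (hL : 0 < L) {s : ℝ → ℝ → ℝ} (hsm : Measurable (Function.uncurry s))
    (hs0 : ∀ x y, 0 ≤ s x y) {S : ℝ} (hS : 0 ≤ S)
    (hsb : ∀ᵐ x ∂μ1, ∀ᵐ y ∂μ2, s x y ≤ S)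
    {E : Set (ℝ × ℝ × ℝ)} (hE : MeasurableSet E) :
    (μ1.prod (μ2.prod (unifIcc 0 L))) {l : ℝ × ℝ × ℝ | (l.1, l.2.1, l.2.2 + s l.1 l.2.1) ∈ E}
      ≤ (μ1.prod (μ2.prod (unifIcc 0 L))) E + ENNReal.ofReal (S / L) ∧
    (μ1.prod (μ2.prod (unifIcc 0 L))) E
      ≤ (μ1.prod (μ2.prod (unifIcc 0 L))) {l : ℝ × ℝ × ℝ | (l.1, l.2.1, l.2.2 + s l.1 l.2.1) ∈ E}
        + ENNReal.ofReal (S / L) := by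
  haveI : IsProbabilityMeasure (unifIcc 0 L) := isProb_unifIcc hL
  set μ3 := unifIcc 0 L with hμ3
  have hτ : Measurable (fun l : ℝ × ℝ × ℝ => (l.1, l.2.1, l.2.2 + s l.1 l.2.1)) := by
    refine measurable_fst.prodMk (Measurable.prodMk (measurable_fst.comp measurable_snd) ?_)
    exact (measurable_snd.comp measurable_snd).add
      (hsm.comp (measurable_fst.prodMk (measurable_fst.comp measurable_snd)))
  have hEs : MeasurableSet {l : ℝ × ℝ × ℝ | (l.1, l.2.1, l.2.2 + s l.1 l.2.1) ∈ E} := hτ hE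
  have hsecE2 : ∀ x y : ℝ, MeasurableSet {z : ℝ | (x, y, z) ∈ E} := fun x y =>
    measurable_prodMk_left (measurable_prodMk_left hE)
  have hφ : ∀ x : ℝ, Measurable (fun p : ℝ × ℝ => ((x, p.1, p.2 + s x p.1) : ℝ × ℝ × ℝ)) := by
    intro x
    exact measurable_const.prodMk (measurable_fst.prodMk
      (measurable_snd.add (hsm.comp (measurable_const.prodMk measurable_fst))))
  -- inner bounds for fixed x with a.e. y bound
  have inner₁ : ∀ x : ℝ, (∀ᵐ y ∂μ2, s x y ≤ S) →
      (μ2.prod μ3) {p : ℝ × ℝ | (x, p.1, p.2 + s x p.1) ∈ E}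
        ≤ (μ2.prod μ3) (Prod.mk x ⁻¹' E) + ENNReal.ofReal (S / L) := by
    intro x hx
    rw [Measure.prod_apply (show MeasurableSet {p : ℝ × ℝ | (x, p.1, p.2 + s x p.1) ∈ E}
        from (hφ x) hE),
      Measure.prod_apply (measurable_prodMk_left hE)]
    have step1 : ∫⁻ y, μ3 (Prod.mk y ⁻¹' {p : ℝ × ℝ | (x, p.1, p.2 + s x p.1) ∈ E}) ∂μ2
        ≤ ∫⁻ y, (μ3 {z : ℝ | (x, y, z) ∈ E} + ENNReal.ofReal (S / L)) ∂μ2 := by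
      refine lintegral_mono_ae ?_
      filter_upwards [hx] with y hy
      have h1 := (unifIcc_shift hL (hs0 x y) (hsecE2 x y)).1
      have h2 : ENNReal.ofReal (s x y / L) ≤ ENNReal.ofReal (S / L) :=
        ENNReal.ofReal_le_ofReal (by gcongr)
      calc μ3 (Prod.mk y ⁻¹' {p : ℝ × ℝ | (x, p.1, p.2 + s x p.1) ∈ E})
          = μ3 ((fun z => z + s x y) ⁻¹' {z : ℝ | (x, y, z) ∈ E}) := rfl
        _ ≤ μ3 {z : ℝ | (x, y, z) ∈ E} + ENNReal.ofReal (s x y / L) := h1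
        _ ≤ μ3 {z : ℝ | (x, y, z) ∈ E} + ENNReal.ofReal (S / L) := add_le_add_right h2 _
    calc ∫⁻ y, μ3 (Prod.mk y ⁻¹' {p : ℝ × ℝ | (x, p.1, p.2 + s x p.1) ∈ E}) ∂μ2
        ≤ ∫⁻ y, (μ3 {z : ℝ | (x, y, z) ∈ E} + ENNReal.ofReal (S / L)) ∂μ2 := step1
      _ = ∫⁻ y, μ3 {z : ℝ | (x, y, z) ∈ E} ∂μ2 + ENNReal.ofReal (S / L) := by
          rw [lintegral_add_right _ measurable_const, lintegral_const, measure_univ, mul_one]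
      _ = ∫⁻ y, μ3 (Prod.mk y ⁻¹' (Prod.mk x ⁻¹' E)) ∂μ2 + ENNReal.ofReal (S / L) := rfl
  have inner₂ : ∀ x : ℝ, (∀ᵐ y ∂μ2, s x y ≤ S) →
      (μ2.prod μ3) (Prod.mk x ⁻¹' E)
        ≤ (μ2.prod μ3) {p : ℝ × ℝ | (x, p.1, p.2 + s x p.1) ∈ E} + ENNReal.ofReal (S / L) := by
    intro x hx
    rw [Measure.prod_apply (show MeasurableSet {p : ℝ × ℝ | (x, p.1, p.2 + s x p.1) ∈ E}
        from (hφ x) hE),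
      Measure.prod_apply (measurable_prodMk_left hE)]
    have step1 : ∫⁻ y, μ3 (Prod.mk y ⁻¹' (Prod.mk x ⁻¹' E)) ∂μ2
        ≤ ∫⁻ y, (μ3 ((fun z => z + s x y) ⁻¹' {z : ℝ | (x, y, z) ∈ E})
            + ENNReal.ofReal (S / L)) ∂μ2 := by
      refine lintegral_mono_ae ?_
      filter_upwards [hx] with y hy
      have h1 := (unifIcc_shift hL (hs0 x y) (hsecE2 x y)).2
      have h2 : ENNReal.ofReal (s x y / L) ≤ ENNReal.ofReal (S / L) :=
        ENNReal.ofReal_le_ofReal (by gcongr)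
      calc μ3 (Prod.mk y ⁻¹' (Prod.mk x ⁻¹' E))
          = μ3 {z : ℝ | (x, y, z) ∈ E} := rfl
        _ ≤ μ3 ((fun z => z + s x y) ⁻¹' {z : ℝ | (x, y, z) ∈ E}) + ENNReal.ofReal (s x y / L) := h1
        _ ≤ _ := add_le_add_right h2 _
    calc ∫⁻ y, μ3 (Prod.mk y ⁻¹' (Prod.mk x ⁻¹' E)) ∂μ2
        ≤ ∫⁻ y, (μ3 ((fun z => z + s x y) ⁻¹' {z : ℝ | (x, y, z) ∈ E})
            + ENNReal.ofReal (S / L)) ∂μ2 := step1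
      _ = ∫⁻ y, μ3 (Prod.mk y ⁻¹' {p : ℝ × ℝ | (x, p.1, p.2 + s x p.1) ∈ E}) ∂μ2
            + ENNReal.ofReal (S / L) := by
          rw [lintegral_add_right _ measurable_const, lintegral_const, measure_univ, mul_one]
          rfl
  constructor
  · rw [Measure.prod_apply hEs, Measure.prod_apply hE]
    calc ∫⁻ x, (μ2.prod μ3) (Prod.mk x ⁻¹' {l : ℝ × ℝ × ℝ | (l.1, l.2.1, l.2.2 + s l.1 l.2.1) ∈ E}) ∂μ1
        ≤ ∫⁻ x, ((μ2.prod μ3) (Prod.mk x ⁻¹' E) + ENNReal.ofReal (S / L)) ∂μ1 := by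
          refine lintegral_mono_ae ?_
          filter_upwards [hsb] with x hx
          exact inner₁ x hx
      _ = ∫⁻ x, (μ2.prod μ3) (Prod.mk x ⁻¹' E) ∂μ1 + ENNReal.ofReal (S / L) := by
          rw [lintegral_add_right _ measurable_const, lintegral_const, measure_univ, mul_one]
  · rw [Measure.prod_apply hEs, Measure.prod_apply hE]
    calc ∫⁻ x, (μ2.prod μ3) (Prod.mk x ⁻¹' E) ∂μ1
        ≤ ∫⁻ x, ((μ2.prod μ3) (Prod.mk x ⁻¹' {l : ℝ × ℝ × ℝ | (l.1, l.2.1, l.2.2 + s l.1 l.2.1) ∈ E})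
            + ENNReal.ofReal (S / L)) ∂μ1 := by
          refine lintegral_mono_ae ?_
          filter_upwards [hsb] with x hx
          exact inner₂ x hx
      _ = _ := by
          rw [lintegral_add_right _ measurable_const, lintegral_const, measure_univ, mul_one]

lemma shift_mid {μ1 μ3 : Measure ℝ} [IsProbabilityMeasure μ1] [IsProbabilityMeasure μ3]
    {L : ℝ} (hL : 0 < L) {s : ℝ → ℝ} (hsm : Measurable s) {S : ℝ}
    (hsb : ∀ᵐ x ∂μ1, 0 ≤ s x ∧ s x ≤ S)
    {E : Set (ℝ × ℝ × ℝ)} (hE : MeasurableSet E) :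
    (μ1.prod ((unifIcc 0 L).prod μ3)) {l : ℝ × ℝ × ℝ | (l.1, l.2.1 + s l.1, l.2.2) ∈ E}
      ≤ (μ1.prod ((unifIcc 0 L).prod μ3)) E + ENNReal.ofReal (S / L) ∧
    (μ1.prod ((unifIcc 0 L).prod μ3)) E
      ≤ (μ1.prod ((unifIcc 0 L).prod μ3)) {l : ℝ × ℝ × ℝ | (l.1, l.2.1 + s l.1, l.2.2) ∈ E}
        + ENNReal.ofReal (S / L) := by
  haveI : IsProbabilityMeasure (unifIcc 0 L) := isProb_unifIcc hL
  set μ2 := unifIcc 0 L with hμ2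
  have hτ : Measurable (fun l : ℝ × ℝ × ℝ => (l.1, l.2.1 + s l.1, l.2.2)) := by
    refine measurable_fst.prodMk (Measurable.prodMk ?_ (measurable_snd.comp measurable_snd))
    exact (measurable_fst.comp measurable_snd).add (hsm.comp measurable_fst)
  have hEs : MeasurableSet {l : ℝ × ℝ × ℝ | (l.1, l.2.1 + s l.1, l.2.2) ∈ E} := hτ hE
  have hφ : ∀ x : ℝ, Measurable (fun p : ℝ × ℝ => ((x, p.1 + s x, p.2) : ℝ × ℝ × ℝ)) := fun x =>
    measurable_const.prodMk ((measurable_fst.add_const (s x)).prodMk measurable_snd)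
  have hsec : ∀ x z : ℝ, MeasurableSet {y : ℝ | (x, y, z) ∈ E} := by
    intro x z
    have : MeasurableSet ((fun y : ℝ => ((x, y, z) : ℝ × ℝ × ℝ)) ⁻¹' E) :=
      (measurable_const.prodMk (measurable_id.prodMk measurable_const)) hE
    exact this
  have inner₁ : ∀ x : ℝ, 0 ≤ s x → s x ≤ S →
      (μ2.prod μ3) {p : ℝ × ℝ | (x, p.1 + s x, p.2) ∈ E}
        ≤ (μ2.prod μ3) (Prod.mk x ⁻¹' E) + ENNReal.ofReal (S / L) := by
    intro x h0 h1
    rw [Measure.prod_apply_symm (show MeasurableSet {p : ℝ × ℝ | (x, p.1 + s x, p.2) ∈ E}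
        from (hφ x) hE),
      Measure.prod_apply_symm (measurable_prodMk_left hE)]
    calc ∫⁻ z, μ2 ((fun y => (y, z)) ⁻¹' {p : ℝ × ℝ | (x, p.1 + s x, p.2) ∈ E}) ∂μ3
        ≤ ∫⁻ z, (μ2 {y : ℝ | (x, y, z) ∈ E} + ENNReal.ofReal (S / L)) ∂μ3 := by
          refine lintegral_mono fun z => ?_
          have hstep := (unifIcc_shift hL h0 (hsec x z)).1
          have h2 : ENNReal.ofReal (s x / L) ≤ ENNReal.ofReal (S / L) :=
            ENNReal.ofReal_le_ofReal (by gcongr)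
          calc μ2 ((fun y => (y, z)) ⁻¹' {p : ℝ × ℝ | (x, p.1 + s x, p.2) ∈ E})
              = μ2 ((fun y => y + s x) ⁻¹' {y : ℝ | (x, y, z) ∈ E}) := rfl
            _ ≤ μ2 {y : ℝ | (x, y, z) ∈ E} + ENNReal.ofReal (s x / L) := hstep
            _ ≤ _ := add_le_add_right h2 _
      _ = ∫⁻ z, μ2 {y : ℝ | (x, y, z) ∈ E} ∂μ3 + ENNReal.ofReal (S / L) := by
          rw [lintegral_add_right _ measurable_const, lintegral_const, measure_univ, mul_one]
      _ = ∫⁻ z, μ2 ((fun y => (y, z)) ⁻¹' (Prod.mk x ⁻¹' E)) ∂μ3 + ENNReal.ofReal (S / L) := rfl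
  have inner₂ : ∀ x : ℝ, 0 ≤ s x → s x ≤ S →
      (μ2.prod μ3) (Prod.mk x ⁻¹' E)
        ≤ (μ2.prod μ3) {p : ℝ × ℝ | (x, p.1 + s x, p.2) ∈ E} + ENNReal.ofReal (S / L) := by
    intro x h0 h1
    rw [Measure.prod_apply_symm (show MeasurableSet {p : ℝ × ℝ | (x, p.1 + s x, p.2) ∈ E}
        from (hφ x) hE),
      Measure.prod_apply_symm (measurable_prodMk_left hE)]
    calc ∫⁻ z, μ2 ((fun y => (y, z)) ⁻¹' (Prod.mk x ⁻¹' E)) ∂μ3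
        ≤ ∫⁻ z, (μ2 ((fun y => y + s x) ⁻¹' {y : ℝ | (x, y, z) ∈ E})
            + ENNReal.ofReal (S / L)) ∂μ3 := by
          refine lintegral_mono fun z => ?_
          have hstep := (unifIcc_shift hL h0 (hsec x z)).2
          have h2 : ENNReal.ofReal (s x / L) ≤ ENNReal.ofReal (S / L) :=
            ENNReal.ofReal_le_ofReal (by gcongr)
          calc μ2 ((fun y => (y, z)) ⁻¹' (Prod.mk x ⁻¹' E))
              = μ2 {y : ℝ | (x, y, z) ∈ E} := rfl
            _ ≤ μ2 ((fun y => y + s x) ⁻¹' {y : ℝ | (x, y, z) ∈ E})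
                + ENNReal.ofReal (s x / L) := hstep
            _ ≤ _ := add_le_add_right h2 _
      _ = ∫⁻ z, μ2 ((fun y => (y, z)) ⁻¹' {p : ℝ × ℝ | (x, p.1 + s x, p.2) ∈ E}) ∂μ3
            + ENNReal.ofReal (S / L) := by
          rw [lintegral_add_right _ measurable_const, lintegral_const, measure_univ, mul_one]
          rfl
  constructor
  · rw [Measure.prod_apply hEs, Measure.prod_apply hE]
    calc ∫⁻ x, (μ2.prod μ3) (Prod.mk x ⁻¹' {l : ℝ × ℝ × ℝ | (l.1, l.2.1 + s l.1, l.2.2) ∈ E}) ∂μ1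
        ≤ ∫⁻ x, ((μ2.prod μ3) (Prod.mk x ⁻¹' E) + ENNReal.ofReal (S / L)) ∂μ1 := by
          refine lintegral_mono_ae ?_
          filter_upwards [hsb] with x hx
          exact inner₁ x hx.1 hx.2
      _ = ∫⁻ x, (μ2.prod μ3) (Prod.mk x ⁻¹' E) ∂μ1 + ENNReal.ofReal (S / L) := by
          rw [lintegral_add_right _ measurable_const, lintegral_const, measure_univ, mul_one]
  · rw [Measure.prod_apply hEs, Measure.prod_apply hE]
    calc ∫⁻ x, (μ2.prod μ3) (Prod.mk x ⁻¹' E) ∂μ1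
        ≤ ∫⁻ x, ((μ2.prod μ3) (Prod.mk x ⁻¹' {l : ℝ × ℝ × ℝ | (l.1, l.2.1 + s l.1, l.2.2) ∈ E})
            + ENNReal.ofReal (S / L)) ∂μ1 := by
          refine lintegral_mono_ae ?_
          filter_upwards [hsb] with x hx
          exact inner₂ x hx.1 hx.2
      _ = _ := by
          rw [lintegral_add_right _ measurable_const, lintegral_const, measure_univ, mul_one]

lemma map_first {μ23 : Measure (ℝ × ℝ)} [IsProbabilityMeasure μ23] {α β : ℝ} (hαβ : α < β)
    {T : ℝ → ℝ} (hT : Measurable T) {e : ℝ≥0∞}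
    (hTbound : ∀ B : Set ℝ, MeasurableSet B →
      unifIcc α β (T ⁻¹' B) ≤ unifIcc α β B + e ∧
      unifIcc α β B ≤ unifIcc α β (T ⁻¹' B) + e)
    {F G : ℝ × ℝ × ℝ → ℝ × ℝ × ℝ} (hF : Measurable F) (hG : Measurable G)
    (hFG : ∀ x ∈ Set.Icc α β, ∀ p : ℝ × ℝ, F (x, p.1, p.2) = G (T x, p.1, p.2))
    {A : Set (ℝ × ℝ × ℝ)} (hA : MeasurableSet A) :
    ((unifIcc α β).prod μ23) (F ⁻¹' A) ≤ ((unifIcc α β).prod μ23) (G ⁻¹' A) + e ∧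
    ((unifIcc α β).prod μ23) (G ⁻¹' A) ≤ ((unifIcc α β).prod μ23) (F ⁻¹' A) + e := by
  haveI : IsProbabilityMeasure (unifIcc α β) := isProb_unifIcc hαβ
  set μ1 := unifIcc α β with hμ1
  have hsecF : ∀ p : ℝ × ℝ, MeasurableSet {x : ℝ | F (x, p.1, p.2) ∈ A} := fun p =>
    (hF.comp (measurable_id.prodMk measurable_const)) hA
  have hsecG : ∀ p : ℝ × ℝ, MeasurableSet {w : ℝ | G (w, p.1, p.2) ∈ A} := fun p =>
    (hG.comp (measurable_id.prodMk measurable_const)) hA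
  have hcongr : ∀ p : ℝ × ℝ,
      μ1 {x : ℝ | F (x, p.1, p.2) ∈ A} = μ1 (T ⁻¹' {w : ℝ | G (w, p.1, p.2) ∈ A}) := by
    intro p
    refine unifIcc_congr (hsecF p) (hT (hsecG p)) ?_
    ext x
    simp only [Set.mem_inter_iff, Set.mem_setOf_eq, Set.mem_preimage]
    constructor
    · rintro ⟨h1, h2⟩
      rw [hFG x h2 p] at h1
      exact ⟨h1, h2⟩
    · rintro ⟨h1, h2⟩
      rw [hFG x h2 p]
      exact ⟨h1, h2⟩
  have happly : ∀ {H : ℝ × ℝ × ℝ → ℝ × ℝ × ℝ}, Measurable H →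
      (μ1.prod μ23) (H ⁻¹' A) = ∫⁻ p, μ1 {x : ℝ | H (x, p.1, p.2) ∈ A} ∂μ23 := by
    intro H hH
    rw [Measure.prod_apply_symm (hH hA)]
    rfl
  constructor
  · rw [happly hF, happly hG]
    calc ∫⁻ p, μ1 {x : ℝ | F (x, p.1, p.2) ∈ A} ∂μ23
        ≤ ∫⁻ p, (μ1 {w : ℝ | G (w, p.1, p.2) ∈ A} + e) ∂μ23 := by
          refine lintegral_mono fun p => ?_
          rw [hcongr p]
          exact (hTbound _ (hsecG p)).1
      _ = ∫⁻ p, μ1 {w : ℝ | G (w, p.1, p.2) ∈ A} ∂μ23 + e := by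
          rw [lintegral_add_right _ measurable_const, lintegral_const, measure_univ, mul_one]
  · rw [happly hF, happly hG]
    calc ∫⁻ p, μ1 {w : ℝ | G (w, p.1, p.2) ∈ A} ∂μ23
        ≤ ∫⁻ p, (μ1 {x : ℝ | F (x, p.1, p.2) ∈ A} + e) ∂μ23 := by
          refine lintegral_mono fun p => ?_
          rw [hcongr p]
          exact (hTbound _ (hsecG p)).2
      _ = _ := by
          rw [lintegral_add_right _ measurable_const, lintegral_const, measure_univ, mul_one]

lemma abs_toReal_sub_le {x y : ℝ≥0∞} {e : ℝ} (hx : x ≠ ⊤) (hy : y ≠ ⊤) (he : 0 ≤ e)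
    (h1 : x ≤ y + ENNReal.ofReal e) (h2 : y ≤ x + ENNReal.ofReal e) :
    |x.toReal - y.toReal| ≤ e := by
  rw [abs_sub_le_iff]
  constructor
  · have := ENNReal.toReal_mono (by finiteness) h1
    rw [ENNReal.toReal_add hy ENNReal.ofReal_ne_top, ENNReal.toReal_ofReal he] at this
    linarith
  · have := ENNReal.toReal_mono (by finiteness) h2
    rw [ENNReal.toReal_add hx ENNReal.ofReal_ne_top, ENNReal.toReal_ofReal he] at this
    linarith



lemma bigCond : ∀ᶠ W in atTop,
    0 < Real.log W ∧ 1 ≤ Real.log (Real.log (Real.log W)) ∧ 2 ≤ Real.log (Real.log W) ∧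
    6 * Real.log (Real.log W) ≤ Real.log W ∧
    3 * (Real.log (Real.log W)) ^ 2 ≤ Real.log W * Real.log (Real.log (Real.log W)) ∧
    (Real.log W) ^ 2 / (Real.log W) ^ 3
      ≤ Real.log (Real.log (Real.log W)) / Real.log (Real.log W) ∧
    Real.exp ((Real.log W) ^ 2 - (Real.log W) ^ 3)
      ≤ Real.log (Real.log (Real.log W)) / Real.log (Real.log W) := by
  have H : ∀ᶠ y in atTop, (0 < y ∧ 1 ≤ Real.log (Real.log y) ∧ 2 ≤ Real.log y ∧
      6 * Real.log y ≤ y ∧ 3 * (Real.log y) ^ 2 ≤ y * Real.log (Real.log y) ∧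
      y ^ 2 / y ^ 3 ≤ Real.log (Real.log y) / Real.log y ∧
      Real.exp (y ^ 2 - y ^ 3) ≤ Real.log (Real.log y) / Real.log y) := by
    have h2 : ∀ᶠ y : ℝ in atTop, 1 ≤ Real.log (Real.log y) :=
      (Real.tendsto_log_atTop.comp Real.tendsto_log_atTop).eventually_ge_atTop 1
    have h3 : ∀ᶠ y : ℝ in atTop, 2 ≤ Real.log y := Real.tendsto_log_atTop.eventually_ge_atTop 2
    have h4 : ∀ᶠ y : ℝ in atTop, |Real.log y| ≤ (1/6) * |y| := by
      have := Real.isLittleO_log_id_atTop.def (by norm_num : (0:ℝ) < 1/6)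
      simpa [Real.norm_eq_abs] using this
    have h5 : ∀ᶠ y : ℝ in atTop, (Real.log y) ^ 2 / (1 * y + 0) < 1/3 := by
      have := Real.tendsto_pow_log_div_mul_add_atTop 1 0 2 one_ne_zero
      exact this.eventually_lt_const (by norm_num)
    filter_upwards [eventually_ge_atTop (2:ℝ), h2, h3, h4, h5] with y hy2 hll1 hl2 hlog6 hsq
    have hy0 : 0 < y := by linarith
    have hl0 : 0 < Real.log y := by linarith
    have hlley : Real.log y ≤ y := by
      have := Real.log_le_sub_one_of_pos hy0
      linarith
    have h6log : 6 * Real.log y ≤ y := by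
      have h1 : Real.log y ≤ |Real.log y| := le_abs_self _
      have h2' : |y| = y := abs_of_pos hy0
      rw [h2'] at hlog6
      linarith
    have hsq' : 3 * (Real.log y) ^ 2 ≤ y := by
      rw [one_mul, add_zero, div_lt_iff₀ hy0] at hsq
      nlinarith
    refine ⟨hy0, hll1, hl2, h6log, ?_, ?_, ?_⟩
    · nlinarith
    · have hy3 : y ^ 2 / y ^ 3 = 1 / y := by
        field_simp
      rw [hy3, div_le_div_iff₀ hy0 hl0]
      nlinarith
    · have hexp : Real.exp (y ^ 2 - y ^ 3) ≤ Real.exp (-y) := by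
        apply Real.exp_le_exp.2
        nlinarith
      have hexp2 : Real.exp (-y) ≤ 1 / (1 + y) := by
        rw [Real.exp_neg]
        rw [inv_eq_one_div, div_le_div_iff₀ (Real.exp_pos y) (by linarith)]
        have := Real.add_one_le_exp y
        linarith
      have hfin : 1 / (1 + y) ≤ Real.log (Real.log y) / Real.log y := by
        rw [div_le_div_iff₀ (by linarith) hl0]
        nlinarith
      linarith
  exact Real.tendsto_log_atTop.eventually H


end RMMObscure

open RMMObscure in
/-- **Lemma 3.8.** There is a universal constant `C` such that, for all sufficiently
large `W`, there is a fixed probability distribution `D` on `ℝ³` (depending only on `W`)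
such that for every triple `0 ≤ a < b < c ≤ 1` with `min(c − b, b − a) > 1/log log W`,
the law of `(f(a), f(b), f(c))` for `f ∼ M(W)` is within total variation distance
`C·(log log log W)/(log log W)` of `D`. -/
theorem random_monotone_map_obscures :
    ∃ C W₀ : ℝ, 0 < C ∧
      ∀ W : ℝ, W₀ ≤ W →
        ∃ D : Measure (ℝ × ℝ × ℝ), IsProbabilityMeasure D ∧
          ∀ a b c : ℝ, 0 ≤ a → a < b → b < c → c ≤ 1 →
            1 / Real.log (Real.log W) < min (c - b) (b - a) →
            tvDist (tripleLaw W a b c) D ≤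
              C * Real.log (Real.log (Real.log W)) / Real.log (Real.log W) := by
  obtain ⟨W₀, hW₀⟩ := Filter.eventually_atTop.mp bigCond
  refine ⟨7, W₀, by norm_num, fun W hW => ?_⟩
  obtain ⟨hlw0, hlll1, hll2, h6, h5, hc6, hc7⟩ := hW₀ W hW
  set lw := Real.log W with hlwdef
  set ll := Real.log lw with hlldef
  set lll := Real.log ll with hllldef
  have hll0 : 0 < ll := by linarith
  have hll1 : 1 ≤ ll := by linarith
  have hlll0 : 0 < lll := by linarith
  have helw : Real.exp ll = lw := Real.exp_log hlw0
  have h2lw : Real.exp (2 * ll) = lw ^ 2 := by rw [two_mul, Real.exp_add, helw]; ring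
  set L3 : ℝ := Real.exp (2 * lw ^ 3) with hL3def
  haveI i1 : IsProbabilityMeasure (unifIcc ll (2 * ll)) := isProb_unifIcc (by linarith)
  haveI i2 : IsProbabilityMeasure (unifIcc 0 (lw ^ 3)) := isProb_unifIcc (by positivity)
  haveI i3 : IsProbabilityMeasure (unifIcc 0 L3) := isProb_unifIcc (Real.exp_pos _)
  have hmw : mwParams W
      = (unifIcc ll (2 * ll)).prod ((unifIcc 0 (lw ^ 3)).prod (unifIcc 0 L3)) := rfl
  haveI iμ : IsProbabilityMeasure (mwParams W) := by rw [hmw]; infer_instance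
  refine ⟨(mwParams W).map G3, Measure.isProbabilityMeasure_map measurable_G3.aemeasurable, ?_⟩
  intro a b c ha hab hbc hc1 hmin
  have hcb : 1 / ll < c - b := lt_of_lt_of_le hmin (min_le_left _ _)
  have hba : 1 / ll < b - a := lt_of_lt_of_le hmin (min_le_right _ _)
  have hb1 : b ≤ 1 := by linarith
  -- the three per-step error terms
  set e1 : ℝ := Real.exp (lw ^ 2 + lw ^ 3) / L3 with he1def
  set e2 : ℝ := lw ^ 2 / lw ^ 3 with he2def
  set e3 : ℝ := (2 * (1 + lll) + (3 * ll / lw) * (2 * ll - ll)) / (2 * ll - ll) with he3def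
  have hlwpos : 0 < lw := hlw0
  have he1pos : 0 ≤ e1 := by positivity
  have he2pos : 0 ≤ e2 := by positivity
  have he3pos : 0 ≤ e3 := by
    rw [he3def]
    have ht : 0 ≤ 3 * ll / lw := div_nonneg (by linarith) hlw0.le
    apply div_nonneg ?_ (by linarith)
    nlinarith
  -- total bound
  have htot : e1 + e2 + e3 ≤ 7 * lll / ll := by
    have h1 : e1 ≤ lll / ll := by
      rw [he1def, hL3def, ← Real.exp_sub]
      have : lw ^ 2 + lw ^ 3 - 2 * lw ^ 3 = lw ^ 2 - lw ^ 3 := by ring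
      rw [this]
      exact hc7
    have h2 : e2 ≤ lll / ll := hc6
    have h3 : e3 ≤ 5 * lll / ll := by
      rw [he3def]
      have hll' : 2 * ll - ll = ll := by ring
      rw [hll']
      have hnum : 2 * (1 + lll) + (3 * ll / lw) * ll ≤ 5 * lll := by
        have hA : (3 * ll / lw) * ll ≤ lll := by
          rw [div_mul_eq_mul_div, div_le_iff₀ hlwpos]
          nlinarith
        nlinarith
      rw [div_le_div_iff₀ hll0 hll0]
      nlinarith
    have hsum : lll / ll + lll / ll + 5 * lll / ll = 7 * lll / ll := by ring
    linarith
  -- key estimate per measurable set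
  have key : ∀ A : Set (ℝ × ℝ × ℝ), MeasurableSet A →
      |(tripleLaw W a b c A).toReal - ((mwParams W).map G3 A).toReal| ≤ 7 * lll / ll := by
    intro A hA
    have htl : tripleLaw W a b c A = mwParams W (G0 a b c ⁻¹' A) := by
      rw [show tripleLaw W a b c = (mwParams W).map (G0 a b c) from rfl,
        Measure.map_apply (measurable_G0 a b c) hA]
    have hd : (mwParams W).map G3 A = mwParams W (G3 ⁻¹' A) :=
      Measure.map_apply measurable_G3 hA
    rw [htl, hd, hmw]
    set μ := (unifIcc ll (2 * ll)).prod ((unifIcc 0 (lw ^ 3)).prod (unifIcc 0 L3)) with hμdef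
    -- link 1
    have hI1 : G0 a b c ⁻¹' A
        = {l : ℝ × ℝ × ℝ | (l.1, l.2.1, l.2.2 + sh3 a l.1 l.2.1) ∈ G1 a b c ⁻¹' A} := by
      ext l
      simp only [Set.mem_preimage, Set.mem_setOf_eq]
      rw [G0_eq a b c l]
    have hs3b : ∀ᵐ x ∂(unifIcc ll (2 * ll)), ∀ᵐ y ∂(unifIcc 0 (lw ^ 3)),
        sh3 a x y ≤ Real.exp (lw ^ 2 + lw ^ 3) := by
      filter_upwards [ae_mem_unifIcc] with x hx
      filter_upwards [ae_mem_unifIcc] with y hy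
      have hex : Real.exp x ≤ lw ^ 2 := by
        calc Real.exp x ≤ Real.exp (2 * ll) := Real.exp_le_exp.2 hx.2
          _ = lw ^ 2 := h2lw
      have h1 : a * Real.exp x ≤ lw ^ 2 := by
        calc a * Real.exp x ≤ 1 * Real.exp x :=
              mul_le_mul_of_nonneg_right (by linarith) (Real.exp_pos x).le
          _ = Real.exp x := one_mul _
          _ ≤ lw ^ 2 := hex
      have h2 : y ≤ lw ^ 3 := hy.2
      calc sh3 a x y = Real.exp (a * Real.exp x) * Real.exp y := rfl
        _ ≤ Real.exp (lw ^ 2) * Real.exp (lw ^ 3) := by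
            exact mul_le_mul (Real.exp_le_exp.2 h1) (Real.exp_le_exp.2 h2)
              (Real.exp_pos y).le (Real.exp_pos _).le
        _ = Real.exp (lw ^ 2 + lw ^ 3) := by rw [← Real.exp_add]
    have h01 := shift_last (μ1 := unifIcc ll (2 * ll)) (μ2 := unifIcc 0 (lw ^ 3))
      (Real.exp_pos (2 * lw ^ 3)) (measurable_sh3 a) (fun x y => by unfold sh3; positivity)
      (Real.exp_pos _).le hs3b ((measurable_G1 a b c) hA)
    rw [← hL3def, ← hI1, ← hμdef] at h01
    -- link 2
    have hI2 : G1 a b c ⁻¹' A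
        = {l : ℝ × ℝ × ℝ | (l.1, l.2.1 + Real.log (Nf b a l.1), l.2.2) ∈ G2 a b c ⁻¹' A} := by
      ext l
      simp only [Set.mem_preimage, Set.mem_setOf_eq]
      rw [G1_eq hab hbc l]
    have hs2b : ∀ᵐ x ∂(unifIcc ll (2 * ll)),
        0 ≤ Real.log (Nf b a x) ∧ Real.log (Nf b a x) ≤ lw ^ 2 := by
      filter_upwards [ae_mem_unifIcc] with x hx
      have hu1 : lw ≤ Real.exp x := by
        calc lw = Real.exp ll := helw.symm
          _ ≤ Real.exp x := Real.exp_le_exp.2 hx.1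
      have hu2 : Real.exp x ≤ lw ^ 2 := by
        calc Real.exp x ≤ Real.exp (2 * ll) := Real.exp_le_exp.2 hx.2
          _ = lw ^ 2 := h2lw
      exact sh2_bounds ha hab hb1 hll1 h6 hba hu1 hu2
    have h12 := shift_mid (μ1 := unifIcc ll (2 * ll)) (μ3 := unifIcc 0 L3)
      (by positivity : (0:ℝ) < lw ^ 3) ((measurable_Nf b a).log) hs2b ((measurable_G2 a b c) hA)
    rw [← hI2, ← hμdef] at h12
    -- link 3
    have hTb : ∀ B : Set ℝ, MeasurableSet B →
        unifIcc ll (2 * ll) (Tf a b c ⁻¹' B)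
          ≤ unifIcc ll (2 * ll) B + ENNReal.ofReal e3 ∧
        unifIcc ll (2 * ll) B
          ≤ unifIcc ll (2 * ll) (Tf a b c ⁻¹' B) + ENNReal.ofReal e3 := by
      intro B hB
      have hbase : ∀ x ∈ Set.Icc ll (2 * ll), lw ≤ Real.exp x := by
        intro x hx
        calc lw = Real.exp ll := helw.symm
          _ ≤ Real.exp x := Real.exp_le_exp.2 hx.1
      have hTB := unif_mono_map (α := ll) (β := 2 * ll) (s := 1 + lll) (ε := 3 * ll / lw)
        (by linarith) (by linarith) (div_nonneg (by linarith) hlwpos.le)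
        (measurable_Tf a b c) (measurable_Td a b c)
        (fun x hx => hasDerivAt_Tf hab hbc
          (by have := (T_bounds ha hab hbc hc1 hll1 h6 hcb hba (hbase x hx)).1; linarith))
        (fun x hx => by
          have := (T_bounds ha hab hbc hc1 hll1 h6 hcb hba (hbase x hx)).2.1
          have := abs_le.1 this
          linarith [this.1])
        (fun x hx => by
          have := (T_bounds ha hab hbc hc1 hll1 h6 hcb hba (hbase x hx)).2.1
          have := abs_le.1 this
          linarith [this.2])
        (fun x hx => (T_bounds ha hab hbc hc1 hll1 h6 hcb hba (hbase x hx)).2.2)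
        hB
      have : (2 * (1 + lll) + (3 * ll / lw) * (2 * ll - ll)) / (2 * ll - ll) = e3 := by
        rw [he3def]
      rw [this] at hTB
      exact hTB
    have hFG : ∀ x ∈ Set.Icc ll (2 * ll), ∀ p : ℝ × ℝ,
        G2 a b c (x, p.1, p.2) = G3 (Tf a b c x, p.1, p.2) := by
      intro x hx p
      have hu1 : lw ≤ Real.exp x := by
        calc lw = Real.exp ll := helw.symm
          _ ≤ Real.exp x := Real.exp_le_exp.2 hx.1
      exact G2_eq (by
        have := (T_bounds ha hab hbc hc1 hll1 h6 hcb hba hu1).1; linarith) p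
    have h23 := map_first (μ23 := (unifIcc 0 (lw ^ 3)).prod (unifIcc 0 L3))
      (show ll < 2 * ll by linarith) (measurable_Tf a b c) hTb
      (measurable_G2 a b c) measurable_G3 hFG hA
    rw [← hμdef] at h23
    -- combine
    set E1 : ℝ≥0∞ := ENNReal.ofReal e1 with hE1def
    set E2 : ℝ≥0∞ := ENNReal.ofReal e2 with hE2def
    set E3 : ℝ≥0∞ := ENNReal.ofReal e3 with hE3def
    have hEsum : E1 + E2 + E3 ≤ ENNReal.ofReal (7 * lll / ll) := by
      rw [hE1def, hE2def, hE3def, ← ENNReal.ofReal_add he1pos he2pos,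
        ← ENNReal.ofReal_add (by positivity) he3pos]
      exact ENNReal.ofReal_le_ofReal htot
    have d1 : μ (G0 a b c ⁻¹' A) ≤ μ (G3 ⁻¹' A) + ENNReal.ofReal (7 * lll / ll) := by
      calc μ (G0 a b c ⁻¹' A) ≤ μ (G1 a b c ⁻¹' A) + E1 := h01.1
        _ ≤ (μ (G2 a b c ⁻¹' A) + E2) + E1 := add_le_add_left h12.1 E1
        _ ≤ ((μ (G3 ⁻¹' A) + E3) + E2) + E1 :=
            add_le_add_left (add_le_add_left h23.1 E2) E1
        _ = μ (G3 ⁻¹' A) + (E1 + E2 + E3) := by ring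
        _ ≤ μ (G3 ⁻¹' A) + ENNReal.ofReal (7 * lll / ll) := add_le_add_right hEsum _
    have d2 : μ (G3 ⁻¹' A) ≤ μ (G0 a b c ⁻¹' A) + ENNReal.ofReal (7 * lll / ll) := by
      calc μ (G3 ⁻¹' A) ≤ μ (G2 a b c ⁻¹' A) + E3 := h23.2
        _ ≤ (μ (G1 a b c ⁻¹' A) + E2) + E3 := add_le_add_left h12.2 E3
        _ ≤ ((μ (G0 a b c ⁻¹' A) + E1) + E2) + E3 :=
            add_le_add_left (add_le_add_left h01.2 E2) E3
        _ = μ (G0 a b c ⁻¹' A) + (E1 + E2 + E3) := by ring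
        _ ≤ _ := add_le_add_right hEsum _
    haveI : IsProbabilityMeasure μ := by rw [hμdef]; infer_instance
    exact abs_toReal_sub_le (measure_ne_top μ _) (measure_ne_top μ _)
      (div_nonneg (by linarith) hll0.le) d1 d2
  haveI : Nonempty {A : Set (ℝ × ℝ × ℝ) // MeasurableSet A} := ⟨⟨∅, MeasurableSet.empty⟩⟩
  rw [tvDist]
  exact ciSup_le fun A => key A.1 A.2
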